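/- arXiv:1804.08645 — 3 statements merged into one kernel-verified Lean document; each statement's English description precedes it below -/
import Mathlib

section
/- Let D = (x_1,...,x_n) be reals with x_1 ≤ x_2 ≤ ⋯ ≤ x_n and n ≥ 2. Then for every index i, min{ Var(D − x_1), Var(D − x_n) } ≤ Var(D − x_i), where D − x_j denotes the multiset D with the entry x_j removed. -/
/-- Mean of a finite multiset of reals (0 for the empty multiset). -/
noncomputable def mMean (s : Multiset ℝ) : ℝ := s.sum / (Multiset.card s : ℝ)

/-- Variance of a finite multiset of reals (0 for the empty multiset). -/
noncomputable def mVar (s : Multiset ℝ) : ℝ :=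
  ((s.map (fun x => (x - mMean s) ^ 2)).sum) / (Multiset.card s : ℝ)

/-!
Write `Q = ∑ xⱼ²`, `S = ∑ xⱼ` and `m = n - 1`. Removing an entry `a` leaves variance
`(Q - a²)/m - ((S - a)/m)²`, a quadratic in `a` with leading coefficient `-(1/m + 1/m²) ≤ 0`.
It is therefore concave in `a`, so on `[x₁, xₙ]` it attains its minimum at an endpoint.
-/

open Set

lemma Multiset.sum_map_sub_sq (t : Multiset ℝ) (c : ℝ) :
    (t.map fun x => (x - c) ^ 2).sum
      = (t.map fun x => x ^ 2).sum - 2 * c * t.sum + (Multiset.card t : ℝ) * c ^ 2 := by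
  induction t using Multiset.induction with
  | empty => simp
  | cons a t ih =>
    simp only [Multiset.map_cons, Multiset.sum_cons, Multiset.card_cons, ih]
    push_cast
    ring

lemma mVar_eq_sum_sq_div_sub_mMean_sq (t : Multiset ℝ) :
    mVar t = (t.map fun x => x ^ 2).sum / (Multiset.card t : ℝ) - mMean t ^ 2 := by
  rcases eq_or_ne (Multiset.card t : ℝ) 0 with h | h
  · simp [mVar, mMean, h]
  · rw [mVar, mMean, Multiset.sum_map_sub_sq]
    field_simp
    ring

lemma mVar_erase {s : Multiset ℝ} {a : ℝ} (h : a ∈ s) :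
    mVar (s.erase a) = ((s.map fun x => x ^ 2).sum - a ^ 2) / ((Multiset.card s : ℝ) - 1)
      - ((s.sum - a) / ((Multiset.card s : ℝ) - 1)) ^ 2 := by
  have hsum : (s.erase a).sum = s.sum - a := by
    rw [← Multiset.sum_erase h]; ring
  have hsq : ((s.erase a).map fun x => x ^ 2).sum = (s.map fun x => x ^ 2).sum - a ^ 2 := by
    rw [← Multiset.sum_map_erase h]; ring
  have hcard : (Multiset.card (s.erase a) : ℝ) = (Multiset.card s : ℝ) - 1 := by
    rw [Multiset.card_erase_of_mem h]
    exact Nat.cast_pred (Multiset.card_pos_iff_exists_mem.2 ⟨a, h⟩)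
  rw [mVar_eq_sum_sq_div_sub_mMean_sq, mMean, hsum, hsq, hcard]

lemma concaveOn_univ_add_mul_sub_mul_sq {k : ℝ} (b c : ℝ) (hk : 0 ≤ k) :
    ConcaveOn ℝ univ fun a : ℝ => c + b * a - k * a ^ 2 := by
  refine ⟨convex_univ, fun x _ y _ s t hs ht hst => ?_⟩
  obtain rfl : t = 1 - s := by linarith
  simp only [smul_eq_mul]
  nlinarith [mul_nonneg (mul_nonneg (mul_nonneg hk hs) ht) (sq_nonneg (x - y))]

lemma concaveOn_variance_after_removal (Q S : ℝ) {m : ℝ} (hm : 0 ≤ m) :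
    ConcaveOn ℝ univ fun a : ℝ => (Q - a ^ 2) / m - ((S - a) / m) ^ 2 := by
  convert concaveOn_univ_add_mul_sub_mul_sq (2 * S / m ^ 2) (Q / m - S ^ 2 / m ^ 2)
    (by positivity : 0 ≤ 1 / m + 1 / m ^ 2) using 1
  funext a
  ring

theorem min_mVar_erase_le {s : Multiset ℝ} {a b c : ℝ} (ha : a ∈ s) (hb : b ∈ s) (hc : c ∈ s)
    (hac : a ≤ c) (hcb : c ≤ b) :
    min (mVar (s.erase a)) (mVar (s.erase b)) ≤ mVar (s.erase c) := by
  have hm : 0 ≤ (Multiset.card s : ℝ) - 1 :=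
    sub_nonneg.2 (Nat.one_le_cast.2 (Multiset.card_pos_iff_exists_mem.2 ⟨a, ha⟩))
  rw [mVar_erase ha, mVar_erase hb, mVar_erase hc]
  exact (concaveOn_variance_after_removal _ _ hm).min_le_of_mem_Icc trivial trivial ⟨hac, hcb⟩

/-- For sorted reals `x₁ ≤ ⋯ ≤ xₙ` (`n ≥ 2`), removing either the minimum or the
maximum entry achieves the smallest variance among all single-entry removals. -/
theorem stmt2 (n : ℕ) (hn : 2 ≤ n) (x : Fin n → ℝ) (hmono : Monotone x) (i : Fin n) :
    min (mVar ((List.ofFn x : Multiset ℝ).erase (x ⟨0, by omega⟩)))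
        (mVar ((List.ofFn x : Multiset ℝ).erase (x ⟨n - 1, by omega⟩)))
      ≤ mVar ((List.ofFn x : Multiset ℝ).erase (x i)) := by
  have hmem : ∀ j : Fin n, x j ∈ (List.ofFn x : Multiset ℝ) := fun j =>
    Multiset.mem_coe.2 (List.mem_ofFn.2 ⟨j, rfl⟩)
  exact min_mVar_erase_le (hmem _) (hmem _) (hmem i)
    (hmono (Fin.le_def.2 (Nat.zero_le i.val)))
    (hmono (Fin.le_def.2 (by omega : i.val ≤ n - 1)))
end

section
/- Let g be the Sensitivity-Preprocessing Function of f: 𝒟 → ℝ with nonnegative parameters {Δ_i}. For any database D with f(D) ≠ g(D): if f(D) > g(D), then there exists a strict subset D̃ ⊂ D such that g(D) ≥ f(D̃) + ∑_{i ∈ D ∖ D̃} Δ_i; and symmetrically if f(D) < g(D), there exists D̃ ⊂ D with g(D) ≤ f(D̃) − ∑_{i ∈ D ∖ D̃} Δ_i. -/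
variable {α : Type*} [DecidableEq α]

/-- The Sensitivity-Preprocessing Function of `f` with individual sensitivity
parameters `Δ`: `g ∅ = f ∅`, and for nonempty `D`, `g D = Upper D` if
`Upper D ≤ f D`, `g D = Lower D` if `Lower D ≥ f D`, and `g D = f D` otherwise,
where `Upper D = min_{a ∈ D} (g (D.erase a) + Δ a)` and
`Lower D = max_{a ∈ D} (g (D.erase a) - Δ a)`. -/
noncomputable def SPF (f : Finset α → ℝ) (Δ : α → ℝ) : Finset α → ℝ := fun D =>
  if h : D.Nonempty then
    let U : ℝ := D.attach.inf' (Finset.attach_nonempty_iff.mpr h)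
      (fun a => SPF f Δ (D.erase a.1) + Δ a.1)
    let L : ℝ := D.attach.sup' (Finset.attach_nonempty_iff.mpr h)
      (fun a => SPF f Δ (D.erase a.1) - Δ a.1)
    if U ≤ f D then U
    else if f D ≤ L then L
    else f D
  else f ∅
termination_by D => D.card
decreasing_by all_goals exact Finset.card_erase_lt_of_mem a.2

/-!
If `g D < f D`, then `g D` is the upper bound `Upper D`, attained at some `a ∈ D`, so
`g D = g (D.erase a) + Δ a`. Iterating this while `g < f` along `D ⊃ D.erase a ⊃ ⋯`
stops at some `D̃` with `f D̃ ≤ g D̃`, and summing the increments gives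
`f D̃ + ∑_{D ∖ D̃} Δ ≤ g D`; `D̃ ≠ D` because `g D < f D`. The case `f D < g D` is dual.
-/

theorem Finset.sum_sdiff_eq_add_sum_erase_sdiff {β : Type*} [AddCommMonoid β] (φ : α → β)
    {s t : Finset α} {a : α} (ha : a ∈ s) (hts : t ⊆ s.erase a) :
    ∑ x ∈ s \ t, φ x = φ a + ∑ x ∈ s.erase a \ t, φ x := by
  have hat : a ∉ t := fun h => (Finset.mem_erase.mp (hts h)).1 rfl
  rw [Finset.erase_sdiff_comm, Finset.add_sum_erase _ _ (Finset.mem_sdiff.mpr ⟨ha, hat⟩)]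

namespace SPF

variable (f : Finset α → ℝ) (Δ : α → ℝ)

theorem empty : SPF f Δ ∅ = f ∅ := by
  rw [SPF]
  simp

variable {f Δ}

theorem exists_eq_add_of_lt {D : Finset α} (h : SPF f Δ D < f D) :
    ∃ a ∈ D, SPF f Δ D = SPF f Δ (D.erase a) + Δ a := by
  obtain rfl | hD := D.eq_empty_or_nonempty
  · rw [empty] at h
    exact absurd h (lt_irrefl _)
  rw [SPF, dif_pos hD] at h ⊢
  dsimp only at h ⊢
  split_ifs at h ⊢ with hU hL
  · obtain ⟨b, -, hb⟩ := Finset.exists_mem_eq_inf' (Finset.attach_nonempty_iff.mpr hD)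
      (fun a => SPF f Δ (D.erase a.1) + Δ a.1)
    exact ⟨b.1, b.2, hb⟩
  · exact absurd hL h.not_ge
  · exact absurd h (lt_irrefl _)

theorem exists_eq_sub_of_gt {D : Finset α} (h : f D < SPF f Δ D) :
    ∃ a ∈ D, SPF f Δ D = SPF f Δ (D.erase a) - Δ a := by
  obtain rfl | hD := D.eq_empty_or_nonempty
  · rw [empty] at h
    exact absurd h (lt_irrefl _)
  rw [SPF, dif_pos hD] at h ⊢
  dsimp only at h ⊢
  split_ifs at h ⊢ with hU hL
  · exact absurd hU h.not_ge
  · obtain ⟨b, -, hb⟩ := Finset.exists_mem_eq_sup' (Finset.attach_nonempty_iff.mpr hD)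
      (fun a => SPF f Δ (D.erase a.1) - Δ a.1)
    exact ⟨b.1, b.2, hb⟩
  · exact absurd h (lt_irrefl _)

variable (f Δ)

theorem exists_subset_add_sum_le (D : Finset α) :
    ∃ D' ⊆ D, f D' + ∑ a ∈ D \ D', Δ a ≤ SPF f Δ D := by
  induction D using Finset.strongInduction with
  | _ D ih =>
  by_cases hfg : f D ≤ SPF f Δ D
  · exact ⟨D, subset_rfl, by simpa using hfg⟩
  obtain ⟨a, ha, hg⟩ := exists_eq_add_of_lt (not_le.mp hfg)
  obtain ⟨D', hD', hle⟩ := ih (D.erase a) (Finset.erase_ssubset ha)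
  refine ⟨D', hD'.trans (Finset.erase_subset a D), ?_⟩
  rw [Finset.sum_sdiff_eq_add_sum_erase_sdiff Δ ha hD', hg]
  linarith

theorem exists_subset_le_sub_sum (D : Finset α) :
    ∃ D' ⊆ D, SPF f Δ D ≤ f D' - ∑ a ∈ D \ D', Δ a := by
  induction D using Finset.strongInduction with
  | _ D ih =>
  by_cases hgf : SPF f Δ D ≤ f D
  · exact ⟨D, subset_rfl, by simpa using hgf⟩
  obtain ⟨a, ha, hg⟩ := exists_eq_sub_of_gt (not_le.mp hgf)
  obtain ⟨D', hD', hle⟩ := ih (D.erase a) (Finset.erase_ssubset ha)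
  refine ⟨D', hD'.trans (Finset.erase_subset a D), ?_⟩
  rw [Finset.sum_sdiff_eq_add_sum_erase_sdiff Δ ha hD', hg]
  linarith

end SPF

theorem stmt13_general (f : Finset α → ℝ) (Δ : α → ℝ) (D : Finset α) :
    (SPF f Δ D < f D →
      ∃ D' : Finset α, D' ⊂ D ∧ f D' + ∑ a ∈ D \ D', Δ a ≤ SPF f Δ D) ∧
    (f D < SPF f Δ D →
      ∃ D' : Finset α, D' ⊂ D ∧ SPF f Δ D ≤ f D' - ∑ a ∈ D \ D', Δ a) := by
  constructor
  · intro hlt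
    obtain ⟨D', hD', hle⟩ := SPF.exists_subset_add_sum_le f Δ D
    refine ⟨D', hD'.ssubset_of_ne ?_, hle⟩
    rintro rfl
    simp only [Finset.sdiff_self, Finset.sum_empty, add_zero] at hle
    exact hle.not_gt hlt
  · intro hlt
    obtain ⟨D', hD', hle⟩ := SPF.exists_subset_le_sub_sum f Δ D
    refine ⟨D', hD'.ssubset_of_ne ?_, hle⟩
    rintro rfl
    simp only [Finset.sdiff_self, Finset.sum_empty, sub_zero] at hle
    exact hle.not_gt hlt

/-- If `f D ≠ g D` then there is a strict subset `D̃ ⊂ D` witnessing that `g D`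
is pinned by the sensitivity constraints: `g D ≥ f D̃ + ∑_{a ∈ D ∖ D̃} Δ a` when
`f D > g D`, and symmetrically when `f D < g D`. -/
theorem stmt13 (f : Finset α → ℝ) (Δ : α → ℝ) (hΔ : ∀ a, 0 ≤ Δ a) (D : Finset α)
    (hne : f D ≠ SPF f Δ D) :
    (SPF f Δ D < f D →
      ∃ D' : Finset α, D' ⊂ D ∧ f D' + ∑ a ∈ D \ D', Δ a ≤ SPF f Δ D) ∧
    (f D < SPF f Δ D →
      ∃ D' : Finset α, D' ⊂ D ∧ SPF f Δ D ≤ f D' - ∑ a ∈ D \ D', Δ a) :=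
  stmt13_general f Δ D
end

section
/- Let g: ℝ^{<ℕ} → ℝ be the Sensitivity-Preprocessing Function of the variance function with single parameter Δ ≥ 0 and g(∅) = 0. Then for every finite database D of reals, g(D) ≤ Var(D). -/
/-! By strong induction on `D`, only the lower clamp `Lower D = max_a (g (D - a) - Δ)` can push
`g D` above `Var D`. Whenever `f ∅ ≤ 0`, `g E ≤ |E| Δ` (the upper clamp caps each step at `+Δ`).
If `g (D - a) - Δ > Var D` for some `a`, then with `n = |D|`, the induction hypothesis
`g (D - a) ≤ Var (D - a)` and `(n - 1) Var (D - a) ≤ n Var D` give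
`(n - 1) g (D - a) < n (g (D - a) - Δ)`, i.e. `n Δ < g (D - a) ≤ (n - 1) Δ`, impossible for `Δ ≥ 0`. -/

variable {α : Type*} [DecidableEq α]

open Finset

section SPF

variable (f : Finset α → ℝ) (Δ : α → ℝ)

lemma SPF_empty : SPF f Δ ∅ = f ∅ := by
  rw [SPF]; simp

/-- Since `SPF f Δ D` is one of `Upper D ≤ f D`, `Lower D`, or `f D < Upper D`, it is bounded by
`max (min (Upper D) (f D)) (Lower D)`. -/
lemma SPF_le_of_nonempty {D : Finset α} (hD : D.Nonempty) {B : ℝ}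
    (hU : f D ≤ B ∨ ∃ a ∈ D, SPF f Δ (D.erase a) + Δ a ≤ B)
    (hL : ∀ a ∈ D, SPF f Δ (D.erase a) - Δ a ≤ B) :
    SPF f Δ D ≤ B := by
  have hLower : D.attach.sup' (attach_nonempty_iff.mpr hD)
      (fun a => SPF f Δ (D.erase a.1) - Δ a.1) ≤ B :=
    Finset.sup'_le _ _ fun a _ => hL a.1 a.2
  rw [SPF, dif_pos hD]
  dsimp only
  split_ifs with hUf hLf
  · rcases hU with hfB | ⟨a, ha, haB⟩
    · exact hUf.trans hfB
    · exact (inf'_le _ (mem_attach _ ⟨a, ha⟩)).trans haB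
  · exact hLower
  · rcases hU with hfB | ⟨a, ha, haB⟩
    · exact hfB
    · exact (not_le.mp hUf).le.trans ((inf'_le _ (mem_attach _ ⟨a, ha⟩)).trans haB)

end SPF

lemma SPF_le_card_mul (f : Finset α → ℝ) (hf : f ∅ ≤ 0) {Δ : ℝ} (hΔ : 0 ≤ Δ) (E : Finset α) :
    SPF f (fun _ => Δ) E ≤ E.card * Δ := by
  induction E using Finset.strongInduction with
  | _ E ih =>
    rcases E.eq_empty_or_nonempty with rfl | hE
    · simpa [SPF_empty] using hf
    have hstep : ∀ a ∈ E, SPF f (fun _ => Δ) (E.erase a) ≤ (E.card - 1) * Δ := fun a ha => by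
      simpa [cast_card_erase_of_mem ha] using ih _ (erase_ssubset ha)
    obtain ⟨a, ha⟩ := hE
    refine SPF_le_of_nonempty _ _ ⟨a, ha⟩ (Or.inr ⟨a, ha, ?_⟩) fun b hb => ?_
    · linarith [hstep a ha]
    · linarith [hstep b hb]

lemma sum_map_sq_sub_eq (t : Multiset ℝ) (c : ℝ) :
    (t.map fun x => (x - c) ^ 2).sum =
      (t.map fun x => x ^ 2).sum - 2 * c * t.sum + Multiset.card t * c ^ 2 := by
  induction t using Multiset.induction_on with
  | empty => simp
  | cons a s ih =>
    simp only [Multiset.map_cons, Multiset.sum_cons, Multiset.card_cons, ih]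
    push_cast
    ring

lemma sum_map_sq_sub_mMean_le (t : Multiset ℝ) (c : ℝ) :
    (t.map fun x => (x - mMean t) ^ 2).sum ≤ (t.map fun x => (x - c) ^ 2).sum := by
  rcases eq_or_ne t 0 with rfl | ht
  · simp
  have hn : (0 : ℝ) < Multiset.card t := by exact_mod_cast Multiset.card_pos.mpr ht
  have hgap : (t.map fun x => (x - c) ^ 2).sum - (t.map fun x => (x - mMean t) ^ 2).sum =
      Multiset.card t * (c - mMean t) ^ 2 := by
    rw [sum_map_sq_sub_eq, sum_map_sq_sub_eq, mMean]
    field_simp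
    ring
  nlinarith [sq_nonneg (c - mMean t)]

lemma card_mul_mVar (t : Multiset ℝ) :
    Multiset.card t * mVar t = (t.map fun x => (x - mMean t) ^ 2).sum := by
  rcases eq_or_ne t 0 with rfl | ht
  · simp [mVar]
  have hn : (Multiset.card t : ℝ) ≠ 0 := by exact_mod_cast (Multiset.card_pos.mpr ht).ne'
  rw [mVar]
  field_simp

lemma card_sub_one_mul_mVar_erase_le {s : Multiset ℝ} {a : ℝ} (ha : a ∈ s) :
    (Multiset.card s - 1) * mVar (s.erase a) ≤ Multiset.card s * mVar s := by
  have hcard : (Multiset.card (s.erase a) : ℝ) = Multiset.card s - 1 := by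
    rw [Multiset.card_erase_of_mem ha, Nat.pred_eq_sub_one,
      Nat.cast_pred (Multiset.card_pos_iff_exists_mem.mpr ⟨a, ha⟩)]
  calc (Multiset.card s - 1) * mVar (s.erase a)
      = ((s.erase a).map fun x => (x - mMean (s.erase a)) ^ 2).sum := by
        rw [← hcard, card_mul_mVar]
    _ ≤ ((s.erase a).map fun x => (x - mMean s) ^ 2).sum := sum_map_sq_sub_mMean_le _ _
    _ ≤ (s.map fun x => (x - mMean s) ^ 2).sum := by
        rw [← Multiset.sum_map_erase ha]
        linarith [sq_nonneg (a - mMean s)]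
    _ = Multiset.card s * mVar s := (card_mul_mVar s).symm

/-- The Sensitivity-Preprocessing Function of variance (with `g ∅ = Var ∅ = 0`)
never exceeds the true variance. Entries are individuals `a : α` carrying real
data `val a`; the variance of a database is the variance of its values. -/
theorem stmt16 (val : α → ℝ) (Δ : ℝ) (hΔ : 0 ≤ Δ) (D : Finset α) :
    SPF (fun E => mVar (E.val.map val)) (fun _ => Δ) D ≤ mVar (D.val.map val) := by
  set f : Finset α → ℝ := fun E => mVar (E.val.map val)
  induction D using Finset.strongInduction with
  | _ D ih =>
    rcases D.eq_empty_or_nonempty with rfl | hD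
    · rw [SPF_empty]
    refine SPF_le_of_nonempty _ _ hD (Or.inl le_rfl) fun a ha => ?_
    have hn : (1 : ℝ) ≤ D.card := by exact_mod_cast card_pos.mpr ⟨a, ha⟩
    have hIH : SPF f (fun _ => Δ) (D.erase a) ≤ f (D.erase a) := ih _ (erase_ssubset ha)
    have hsens : SPF f (fun _ => Δ) (D.erase a) ≤ (D.card - 1) * Δ := by
      simpa [cast_card_erase_of_mem ha] using SPF_le_card_mul f (by simp [f, mVar]) hΔ (D.erase a)
    have hvar : (D.card - 1) * f (D.erase a) ≤ D.card * f D := by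
      have := card_sub_one_mul_mVar_erase_le (Multiset.mem_map_of_mem val ha)
      rwa [Multiset.card_map, ← Multiset.map_erase_of_mem _ _ ha, ← erase_val] at this
    nlinarith
end
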